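/- Let (H, m, u, Δ, ε, ω) be a dual quasi-bialgebra and let (V, ρ, ▷) be a left Yetter-Drinfeld module over H. Then the map c_{H,V}: H⊗V → V⊗H, h⊗v ↦ (h₁ ▷ v) ⊗ h₂, is a morphism of H-bicomodules, where H⊗V carries the left and right H-coactions ρˡ(h⊗v) = h₁v₋₁ ⊗ (h₂⊗v₀), ρʳ(h⊗v) = (h₁⊗v) ⊗ h₂, and V⊗H carries the left and right H-coactions ρˡ(v⊗h) = v₋₁h₁ ⊗ (v₀⊗h₂), ρʳ(v⊗h) = (v⊗h₁) ⊗ h₂. -/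
import Mathlib


open TensorProduct LinearMap

noncomputable section

namespace DQB

variable (k : Type*) [CommRing k]
variable (H : Type*) [AddCommGroup H] [Module k H]

/-- Convolution of two `k`-valued functionals on a module `C` equipped with a
comultiplication-like map `δ`. -/
def conv (C : Type*) [AddCommGroup C] [Module k C]
    (δ : C →ₗ[k] C ⊗[k] C) (f g : C →ₗ[k] k) : C →ₗ[k] k :=
  (LinearMap.mul' k k) ∘ₗ (TensorProduct.map f g) ∘ₗ δ

/-- Convolution `f * g` where `f` is module-valued and `g` is a functional. -/
def convMK (C M : Type*) [AddCommGroup C] [Module k C] [AddCommGroup M] [Module k M]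
    (δ : C →ₗ[k] C ⊗[k] C) (f : C →ₗ[k] M) (g : C →ₗ[k] k) : C →ₗ[k] M :=
  (TensorProduct.rid k M).toLinearMap ∘ₗ (TensorProduct.map f g) ∘ₗ δ

/-- Convolution `g * f` where `g` is a functional and `f` is module-valued. -/
def convKM (C M : Type*) [AddCommGroup C] [Module k C] [AddCommGroup M] [Module k M]
    (δ : C →ₗ[k] C ⊗[k] C) (g : C →ₗ[k] k) (f : C →ₗ[k] M) : C →ₗ[k] M :=
  (TensorProduct.lid k M).toLinearMap ∘ₗ (TensorProduct.map g f) ∘ₗ δ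

/-- `(a ⊗ b) ⊗ c ↦ (a ⊗ c) ⊗ b`. -/
def exch (A B C : Type*) [AddCommGroup A] [Module k A] [AddCommGroup B] [Module k B]
    [AddCommGroup C] [Module k C] : (A ⊗[k] B) ⊗[k] C →ₗ[k] (A ⊗[k] C) ⊗[k] B :=
  (TensorProduct.assoc k A C B).symm.toLinearMap
    ∘ₗ lTensor A (TensorProduct.comm k B C).toLinearMap
    ∘ₗ (TensorProduct.assoc k A B C).toLinearMap

/-- `a ⊗ (b ⊗ c) ↦ b ⊗ (a ⊗ c)`. -/
def exch' (A B C : Type*) [AddCommGroup A] [Module k A] [AddCommGroup B] [Module k B]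
    [AddCommGroup C] [Module k C] : A ⊗[k] (B ⊗[k] C) →ₗ[k] B ⊗[k] (A ⊗[k] C) :=
  (TensorProduct.assoc k B A C).toLinearMap
    ∘ₗ rTensor C (TensorProduct.comm k A B).toLinearMap
    ∘ₗ (TensorProduct.assoc k A B C).symm.toLinearMap

variable (Δ : H →ₗ[k] H ⊗[k] H) (ε : H →ₗ[k] k)

/-- `h ↦ h₁ ⊗ (h₂ ⊗ h₃)`. -/
def comul2 : H →ₗ[k] H ⊗[k] (H ⊗[k] H) := (lTensor H Δ) ∘ₗ Δ

/-- The codiagonal comultiplication of `H ⊗ H`. -/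
def comulT : H ⊗[k] H →ₗ[k] (H ⊗[k] H) ⊗[k] (H ⊗[k] H) :=
  (TensorProduct.tensorTensorTensorComm k H H H H).toLinearMap ∘ₗ TensorProduct.map Δ Δ

/-- The codiagonal comultiplication of `H ⊗ (H ⊗ H)`. -/
def comul3 : H ⊗[k] (H ⊗[k] H) →ₗ[k] (H ⊗[k] (H ⊗[k] H)) ⊗[k] (H ⊗[k] (H ⊗[k] H)) :=
  (TensorProduct.tensorTensorTensorComm k H H (H ⊗[k] H) (H ⊗[k] H)).toLinearMap
    ∘ₗ TensorProduct.map Δ (comulT k H Δ)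

/-- The codiagonal comultiplication of `H ⊗ (H ⊗ (H ⊗ H))`. -/
def comul4 : H ⊗[k] (H ⊗[k] (H ⊗[k] H)) →ₗ[k]
    (H ⊗[k] (H ⊗[k] (H ⊗[k] H))) ⊗[k] (H ⊗[k] (H ⊗[k] (H ⊗[k] H))) :=
  (TensorProduct.tensorTensorTensorComm k H H
      (H ⊗[k] (H ⊗[k] H)) (H ⊗[k] (H ⊗[k] H))).toLinearMap
    ∘ₗ TensorProduct.map Δ (comul3 k H Δ)

/-- The codiagonal counit of `H ⊗ H`. -/
def counit2 : H ⊗[k] H →ₗ[k] k := (LinearMap.mul' k k) ∘ₗ TensorProduct.map ε ε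

/-- The codiagonal counit of `H ⊗ (H ⊗ H)`. -/
def counit3 : H ⊗[k] (H ⊗[k] H) →ₗ[k] k :=
  (LinearMap.mul' k k) ∘ₗ TensorProduct.map ε (counit2 k H ε)

variable (μ : H ⊗[k] H →ₗ[k] H) (e : H) (ω ωInv : H ⊗[k] (H ⊗[k] H) →ₗ[k] k)

/-- A dual quasi-bialgebra structure on `H`, with comultiplication `Δ`, counit `ε`,
multiplication `μ` (a coalgebra map, unitary and quasi-associative), unit `e`, and
unital 3-cocycle `ω` with convolution inverse `ωInv`. -/
structure IsDualQuasiBialgebra : Prop where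
  coassoc : (TensorProduct.assoc k H H H).toLinearMap ∘ₗ (rTensor H Δ) ∘ₗ Δ =
    (lTensor H Δ) ∘ₗ Δ
  counit_comul : (TensorProduct.lid k H).toLinearMap ∘ₗ (rTensor H ε) ∘ₗ Δ = LinearMap.id
  comul_counit : (TensorProduct.rid k H).toLinearMap ∘ₗ (lTensor H ε) ∘ₗ Δ = LinearMap.id
  mul_comul : Δ ∘ₗ μ = (TensorProduct.map μ μ)
    ∘ₗ (TensorProduct.tensorTensorTensorComm k H H H H).toLinearMap ∘ₗ TensorProduct.map Δ Δ
  mul_counit : ε ∘ₗ μ = counit2 k H ε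
  comul_one : Δ e = e ⊗ₜ[k] e
  counit_one : ε e = 1
  one_mul : ∀ h : H, μ (e ⊗ₜ[k] h) = h
  mul_one : ∀ h : H, μ (h ⊗ₜ[k] e) = h
  omega_invL : conv k (H ⊗[k] (H ⊗[k] H)) (comul3 k H Δ) ω ωInv = counit3 k H ε
  omega_invR : conv k (H ⊗[k] (H ⊗[k] H)) (comul3 k H Δ) ωInv ω = counit3 k H ε
  omega_unital₁ : ∀ h l : H, ω (e ⊗ₜ[k] (h ⊗ₜ[k] l)) = ε h * ε l
  omega_unital₂ : ∀ h l : H, ω (h ⊗ₜ[k] (e ⊗ₜ[k] l)) = ε h * ε l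
  omega_unital₃ : ∀ h l : H, ω (h ⊗ₜ[k] (l ⊗ₜ[k] e)) = ε h * ε l
  quasi_assoc : convMK k (H ⊗[k] (H ⊗[k] H)) H (comul3 k H Δ) (μ ∘ₗ lTensor H μ) ω =
    convKM k (H ⊗[k] (H ⊗[k] H)) H (comul3 k H Δ) ω
      (μ ∘ₗ rTensor H μ ∘ₗ (TensorProduct.assoc k H H H).symm.toLinearMap)
  cocycle : conv k (H ⊗[k] (H ⊗[k] (H ⊗[k] H))) (comul4 k H Δ)
      (ω ∘ₗ lTensor H (lTensor H μ))
      (ω ∘ₗ rTensor (H ⊗[k] H) μ ∘ₗ (TensorProduct.assoc k H H (H ⊗[k] H)).symm.toLinearMap) =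
    conv k (H ⊗[k] (H ⊗[k] (H ⊗[k] H))) (comul4 k H Δ)
      (conv k (H ⊗[k] (H ⊗[k] (H ⊗[k] H))) (comul4 k H Δ)
        ((LinearMap.mul' k k) ∘ₗ TensorProduct.map ε ω)
        (ω ∘ₗ lTensor H (rTensor H μ ∘ₗ (TensorProduct.assoc k H H H).symm.toLinearMap)))
      ((LinearMap.mul' k k) ∘ₗ TensorProduct.map ω ε
        ∘ₗ (TensorProduct.assoc k H (H ⊗[k] H) H).symm.toLinearMap
        ∘ₗ lTensor H (TensorProduct.assoc k H H H).symm.toLinearMap)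

/-- A preantipode `S` for a dual quasi-bialgebra. -/
structure IsPreantipode (S : H →ₗ[k] H) : Prop where
  cond1 : (rTensor H μ) ∘ₗ exch k H H H ∘ₗ (rTensor H (Δ ∘ₗ S)) ∘ₗ Δ =
    (TensorProduct.mk k H H e) ∘ₗ S
  cond2 : (lTensor H μ) ∘ₗ exch' k H H H ∘ₗ (lTensor H (Δ ∘ₗ S)) ∘ₗ Δ =
    ((TensorProduct.mk k H H).flip e) ∘ₗ S
  cond3 : ω ∘ₗ (lTensor H (rTensor H S)) ∘ₗ comul2 k H Δ = ε

end DQB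

namespace DQB

open TensorProduct LinearMap

variable (k : Type*) [CommRing k] (H : Type*) [AddCommGroup H] [Module k H]
variable (Δ : H →ₗ[k] H ⊗[k] H) (ε : H →ₗ[k] k)
variable (μ : H ⊗[k] H →ₗ[k] H) (e : H) (ω ωInv : H ⊗[k] (H ⊗[k] H) →ₗ[k] k)
variable (V : Type*) [AddCommGroup V] [Module k V]
variable (ρV : V →ₗ[k] H ⊗[k] V) (act : H ⊗[k] V →ₗ[k] V)

/-- Auxiliary map for the Yetter-Drinfeld quasi-associativity:
`(h⊗l)⊗(m⊗v) ↦ ω⁻¹((h▷v)₋₁ ⊗ l ⊗ m)(h▷v)₀` pattern. -/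
def ydPsi : (H ⊗[k] H) ⊗[k] (H ⊗[k] V) →ₗ[k] V :=
  (TensorProduct.lid k V).toLinearMap
    ∘ₗ rTensor V ωInv
    ∘ₗ (TensorProduct.assoc k H (H ⊗[k] H) V).symm.toLinearMap
    ∘ₗ lTensor H (TensorProduct.comm k V (H ⊗[k] H)).toLinearMap
    ∘ₗ (TensorProduct.assoc k H V (H ⊗[k] H)).toLinearMap
    ∘ₗ rTensor (H ⊗[k] H) (ρV ∘ₗ act)
    ∘ₗ (TensorProduct.tensorTensorTensorComm k H H V H).toLinearMap
    ∘ₗ lTensor (H ⊗[k] H) (TensorProduct.comm k H V).toLinearMap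

/-- Auxiliary map for the Yetter-Drinfeld quasi-associativity. -/
def ydPhi : (H ⊗[k] H) ⊗[k] V →ₗ[k] V :=
  (TensorProduct.lid k V).toLinearMap
    ∘ₗ TensorProduct.map ω (ydPsi k H ωInv V ρV act)
    ∘ₗ (TensorProduct.tensorTensorTensorComm k H (H ⊗[k] H) (H ⊗[k] H)
        (H ⊗[k] V)).toLinearMap
    ∘ₗ lTensor (H ⊗[k] (H ⊗[k] H))
        (rTensor (H ⊗[k] V) (TensorProduct.comm k H H).toLinearMap
          ∘ₗ (TensorProduct.tensorTensorTensorComm k H H H V).toLinearMap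
          ∘ₗ lTensor (H ⊗[k] H) (ρV ∘ₗ act)
          ∘ₗ (TensorProduct.assoc k (H ⊗[k] H) H V).toLinearMap
          ∘ₗ rTensor V (TensorProduct.comm k H (H ⊗[k] H)).toLinearMap)
    ∘ₗ (TensorProduct.assoc k (H ⊗[k] (H ⊗[k] H)) (H ⊗[k] (H ⊗[k] H)) V).toLinearMap
    ∘ₗ rTensor V (TensorProduct.map (comul2 k H Δ) (comul2 k H Δ))

/-- The right-hand side
`ω⁻¹(h₁⊗l₁⊗v₋₁) ω(h₂⊗(l₂▷v₀)₋₁⊗l₃) ω⁻¹((h₃▷(l₂▷v₀)₀)₋₁⊗h₄⊗l₄) (h₃▷(l₂▷v₀)₀)₀` of the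
Yetter-Drinfeld quasi-associativity axiom. -/
def ydQuasiRHS : (H ⊗[k] H) ⊗[k] V →ₗ[k] V :=
  (TensorProduct.lid k V).toLinearMap
    ∘ₗ TensorProduct.map (ωInv ∘ₗ (TensorProduct.assoc k H H H).toLinearMap)
        (ydPhi k H Δ ω ωInv V ρV act)
    ∘ₗ (TensorProduct.tensorTensorTensorComm k (H ⊗[k] H) (H ⊗[k] H) H V).toLinearMap
    ∘ₗ rTensor (H ⊗[k] V) (TensorProduct.tensorTensorTensorComm k H H H H).toLinearMap
    ∘ₗ rTensor (H ⊗[k] V) (TensorProduct.map Δ Δ)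
    ∘ₗ lTensor (H ⊗[k] H) ρV

/-- A left Yetter-Drinfeld module structure `(V, ρV, act)` over a dual quasi-bialgebra. -/
structure IsYetterDrinfeld : Prop where
  coassoc : (rTensor V Δ) ∘ₗ ρV =
    (TensorProduct.assoc k H H V).symm.toLinearMap ∘ₗ (lTensor H ρV) ∘ₗ ρV
  counit : (TensorProduct.lid k V).toLinearMap ∘ₗ (rTensor V ε) ∘ₗ ρV = LinearMap.id
  one_act : ∀ v : V, act (e ⊗ₜ[k] v) = v
  compat : rTensor V μ ∘ₗ exch k H V H ∘ₗ rTensor H (ρV ∘ₗ act)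
      ∘ₗ exch k H H V ∘ₗ rTensor V Δ =
    TensorProduct.map μ act
      ∘ₗ (TensorProduct.tensorTensorTensorComm k H H H V).toLinearMap
      ∘ₗ TensorProduct.map Δ ρV
  quasi : act ∘ₗ rTensor V μ = ydQuasiRHS k H Δ ω ωInv V ρV act

end DQB

namespace DQB

open TensorProduct LinearMap

variable (k : Type*) [CommRing k] (H : Type*) [AddCommGroup H] [Module k H]
variable (Δ : H →ₗ[k] H ⊗[k] H) (μ : H ⊗[k] H →ₗ[k] H)
variable (ωInv : H ⊗[k] (H ⊗[k] H) →ₗ[k] k)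
variable (V : Type*) [AddCommGroup V] [Module k V] (ρV : V →ₗ[k] H ⊗[k] V)

/-- The left coaction `v ⊗ h ↦ v₋₁h₁ ⊗ (v₀ ⊗ h₂)` on `V ⊗ H`. -/
def tensCoactL : V ⊗[k] H →ₗ[k] H ⊗[k] (V ⊗[k] H) :=
  rTensor (V ⊗[k] H) μ
    ∘ₗ (TensorProduct.tensorTensorTensorComm k H V H H).toLinearMap
    ∘ₗ TensorProduct.map ρV Δ

/-- The right coaction `v ⊗ h ↦ (v ⊗ h₁) ⊗ h₂` on `V ⊗ H`. -/
def tensCoactR : V ⊗[k] H →ₗ[k] (V ⊗[k] H) ⊗[k] H :=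
  (TensorProduct.assoc k V H H).symm.toLinearMap ∘ₗ lTensor V Δ

/-- The right action `(v ⊗ h) · l := ω⁻¹(v₋₁ ⊗ h₁ ⊗ l₁) v₀ ⊗ h₂l₂` on `V ⊗ H`. -/
def tensAct : (V ⊗[k] H) ⊗[k] H →ₗ[k] V ⊗[k] H :=
  (TensorProduct.lid k (V ⊗[k] H)).toLinearMap
    ∘ₗ TensorProduct.map (ωInv ∘ₗ (TensorProduct.assoc k H H H).toLinearMap)
        (lTensor V μ ∘ₗ (TensorProduct.assoc k V H H).toLinearMap)
    ∘ₗ (TensorProduct.tensorTensorTensorComm k (H ⊗[k] H) (V ⊗[k] H) H H).toLinearMap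
    ∘ₗ TensorProduct.map
        ((TensorProduct.tensorTensorTensorComm k H V H H).toLinearMap
          ∘ₗ TensorProduct.map ρV Δ) Δ

end DQB


namespace DQBAux

open TensorProduct LinearMap DQB

variable (k : Type*) [CommRing k] (H : Type*) [AddCommGroup H] [Module k H]
variable (V : Type*) [AddCommGroup V] [Module k V]
variable (Δ : H →ₗ[k] H ⊗[k] H) (μ : H ⊗[k] H →ₗ[k] H)
variable (ρV : V →ₗ[k] H ⊗[k] V) (act : H ⊗[k] V →ₗ[k] V)

@[simp] lemma exch_tmul (A B C : Type*) [AddCommGroup A] [Module k A] [AddCommGroup B]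
    [Module k B] [AddCommGroup C] [Module k C] (a : A) (b : B) (c : C) :
    exch k A B C ((a ⊗ₜ[k] b) ⊗ₜ[k] c) = (a ⊗ₜ[k] c) ⊗ₜ[k] b := by
  simp [exch]

lemma auxN1 : rTensor H (rTensor V Δ) ∘ₗ exch k H H V
    = exch k (H ⊗[k] H) H V ∘ₗ rTensor V (rTensor H Δ) := by
  apply TensorProduct.ext'
  intro x v
  induction x using TensorProduct.induction_on with
  | zero => simp
  | add y z hy hz => simp only [add_tmul, map_add, hy, hz]
  | tmul a b => simp

/-- `(a ⊗ (b ⊗ c)) ⊗ v ↦ ((a ▷ v) ⊗ b) ⊗ c` -/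
def auxG : (H ⊗[k] (H ⊗[k] H)) ⊗[k] V →ₗ[k] (V ⊗[k] H) ⊗[k] H :=
  (TensorProduct.assoc k V H H).symm.toLinearMap
    ∘ₗ rTensor (H ⊗[k] H) act
    ∘ₗ exch k H (H ⊗[k] H) V

lemma auxS6 : tensCoactR k H Δ V ∘ₗ rTensor H act ∘ₗ exch k H H V
    = auxG k H V act ∘ₗ rTensor V (lTensor H Δ) := by
  apply TensorProduct.ext'
  intro x v
  induction x using TensorProduct.induction_on with
  | zero => simp
  | add y z hy hz => simp only [add_tmul, map_add, hy, hz]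
  | tmul a b =>
    simp only [comp_apply, rTensor_tmul, lTensor_tmul, exch_tmul, tensCoactR, auxG,
      LinearEquiv.coe_coe]

lemma auxS7 : rTensor H (rTensor H act ∘ₗ exch k H H V ∘ₗ rTensor V Δ) ∘ₗ exch k H H V
    = auxG k H V act
      ∘ₗ rTensor V ((TensorProduct.assoc k H H H).toLinearMap ∘ₗ rTensor H Δ) := by
  apply TensorProduct.ext'
  intro x v
  induction x using TensorProduct.induction_on with
  | zero => simp
  | add y z hy hz => simp only [add_tmul, map_add, hy, hz]
  | tmul a b =>
    simp only [comp_apply, rTensor_tmul, exch_tmul, auxG, LinearEquiv.coe_coe]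
    generalize Δ a = x
    induction x using TensorProduct.induction_on with
    | zero => simp
    | add y z hy hz => simp only [tmul_add, add_tmul, map_add, hy, hz]
    | tmul a1 a2 => simp

/-- `(a ⊗ b) ⊗ v ↦ (a▷v)₋₁b ⊗ (a▷v)₀`. -/
def auxCL' : (H ⊗[k] H) ⊗[k] V →ₗ[k] H ⊗[k] V :=
  rTensor V μ ∘ₗ exch k H V H ∘ₗ rTensor H (ρV ∘ₗ act) ∘ₗ exch k H H V

def auxF (Φ : (H ⊗[k] H) ⊗[k] V →ₗ[k] H ⊗[k] V) :
    (H ⊗[k] (H ⊗[k] H)) ⊗[k] V →ₗ[k] H ⊗[k] (V ⊗[k] H) :=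
  (TensorProduct.assoc k H V H).toLinearMap
    ∘ₗ rTensor H Φ
    ∘ₗ exch k (H ⊗[k] H) H V
    ∘ₗ rTensor V (TensorProduct.assoc k H H H).symm.toLinearMap

lemma auxF_assoc (Φ : (H ⊗[k] H) ⊗[k] V →ₗ[k] H ⊗[k] V) (z : (H ⊗[k] H) ⊗[k] H) (v : V) :
    auxF k H V Φ ((TensorProduct.assoc k H H H) z ⊗ₜ[k] v)
      = (TensorProduct.assoc k H V H)
          (rTensor H Φ (exch k (H ⊗[k] H) H V (z ⊗ₜ[k] v))) := by
  simp [auxF]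

lemma auxS1 : tensCoactL k H Δ μ V ρV ∘ₗ rTensor H act ∘ₗ exch k H H V
    = auxF k H V (auxCL' k H V μ ρV act) ∘ₗ rTensor V (lTensor H Δ) := by
  apply TensorProduct.ext'
  intro x v
  induction x using TensorProduct.induction_on with
  | zero => simp
  | add y z hy hz => simp only [add_tmul, map_add, hy, hz]
  | tmul a b =>
    simp only [comp_apply, rTensor_tmul, lTensor_tmul, exch_tmul, tensCoactL, auxF, auxCL',
      LinearEquiv.coe_coe, TensorProduct.map_tmul]
    generalize Δ b = x
    induction x using TensorProduct.induction_on with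
    | zero => simp
    | add y z hy hz => simp only [tmul_add, add_tmul, map_add, hy, hz]
    | tmul b1 b2 =>
      simp only [assoc_symm_tmul, exch_tmul, rTensor_tmul, comp_apply]
      generalize ρV (act (a ⊗ₜ[k] v)) = y
      induction y using TensorProduct.induction_on with
      | zero => simp
      | add y z hy hz => simp only [tmul_add, add_tmul, map_add, hy, hz]
      | tmul y1 y2 => simp

/-- `(a ⊗ (b₁ ⊗ b₂)) ⊗ (p ⊗ q) ↦ μ(a ⊗ p) ⊗ ((b₁ ▷ q) ⊗ b₂)`. -/
def auxM : (H ⊗[k] (H ⊗[k] H)) ⊗[k] (H ⊗[k] V) →ₗ[k] H ⊗[k] (V ⊗[k] H) :=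
  (TensorProduct.assoc k H V H).toLinearMap
    ∘ₗ rTensor H (TensorProduct.map μ act)
    ∘ₗ rTensor H (TensorProduct.tensorTensorTensorComm k H H H V).toLinearMap
    ∘ₗ exch k (H ⊗[k] H) H (H ⊗[k] V)
    ∘ₗ rTensor (H ⊗[k] V) (TensorProduct.assoc k H H H).symm.toLinearMap

lemma auxS5b :
    lTensor H (rTensor H act ∘ₗ exch k H H V ∘ₗ rTensor V Δ)
      ∘ₗ rTensor (H ⊗[k] V) μ
      ∘ₗ (TensorProduct.tensorTensorTensorComm k H H H V).toLinearMap
    = auxM k H V μ act ∘ₗ rTensor (H ⊗[k] V) (lTensor H Δ) := by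
  apply TensorProduct.ext'
  intro x y
  induction x using TensorProduct.induction_on with
  | zero => simp
  | add x1 x2 h1 h2 => simp only [add_tmul, map_add, h1, h2]
  | tmul a b =>
    induction y using TensorProduct.induction_on with
    | zero => simp
    | add y1 y2 h1 h2 => simp only [tmul_add, map_add, h1, h2]
    | tmul p q =>
      simp only [comp_apply, rTensor_tmul, lTensor_tmul, exch_tmul, auxM,
        LinearEquiv.coe_coe, tensorTensorTensorComm_tmul]
      generalize Δ b = x
      induction x using TensorProduct.induction_on with
      | zero => simp
      | add x1 x2 h1 h2 => simp only [tmul_add, add_tmul, map_add, h1, h2]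
      | tmul b1 b2 => simp

lemma auxS5a :
    (TensorProduct.assoc k H V H).toLinearMap
      ∘ₗ rTensor H (TensorProduct.map μ act
          ∘ₗ (TensorProduct.tensorTensorTensorComm k H H H V).toLinearMap
          ∘ₗ TensorProduct.map Δ ρV)
      ∘ₗ exch k H H V
    = auxM k H V μ act
      ∘ₗ TensorProduct.map ((TensorProduct.assoc k H H H).toLinearMap ∘ₗ rTensor H Δ) ρV := by
  apply TensorProduct.ext'
  intro x v
  induction x using TensorProduct.induction_on with
  | zero => simp
  | add x1 x2 h1 h2 => simp only [add_tmul, map_add, h1, h2]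
  | tmul a b =>
    simp only [comp_apply, rTensor_tmul, lTensor_tmul, exch_tmul, auxM,
      LinearEquiv.coe_coe, TensorProduct.map_tmul]
    generalize Δ a = x
    induction x using TensorProduct.induction_on with
    | zero => simp
    | add x1 x2 h1 h2 => simp only [tmul_add, add_tmul, map_add, h1, h2]
    | tmul a1 a2 =>
      generalize ρV v = y
      induction y using TensorProduct.induction_on with
      | zero => simp
      | add y1 y2 h1 h2 => simp only [tmul_add, add_tmul, map_add, h1, h2]
      | tmul p q => simp

end DQBAux

open DQB TensorProduct LinearMap in
/-- For a dual quasi-bialgebra `H` and a left Yetter-Drinfeld module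
`(V, ρ, ▷)`, the map `c : H ⊗ V → V ⊗ H`, `h ⊗ v ↦ (h₁ ▷ v) ⊗ h₂`, is a morphism of
`H`-bicomodules for the codiagonal coactions on `H ⊗ V` and `V ⊗ H`. -/
theorem braiding_bicomodule_morphism (k : Type*) [Field k]
    (H : Type*) [AddCommGroup H] [Module k H]
    (Δ : H →ₗ[k] H ⊗[k] H) (ε : H →ₗ[k] k) (μ : H ⊗[k] H →ₗ[k] H) (e : H)
    (ω ωInv : H ⊗[k] (H ⊗[k] H) →ₗ[k] k)
    (hH : IsDualQuasiBialgebra k H Δ ε μ e ω ωInv)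
    (V : Type*) [AddCommGroup V] [Module k V]
    (ρV : V →ₗ[k] H ⊗[k] V) (act : H ⊗[k] V →ₗ[k] V)
    (hV : IsYetterDrinfeld k H Δ ε μ e ω ωInv V ρV act) :
    -- left `H`-colinearity of `c`
    tensCoactL k H Δ μ V ρV ∘ₗ (rTensor H act ∘ₗ exch k H H V ∘ₗ rTensor V Δ) =
      lTensor H (rTensor H act ∘ₗ exch k H H V ∘ₗ rTensor V Δ)
        ∘ₗ (rTensor (H ⊗[k] V) μ
            ∘ₗ (TensorProduct.tensorTensorTensorComm k H H H V).toLinearMap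
            ∘ₗ TensorProduct.map Δ ρV) ∧
    -- right `H`-colinearity of `c`
    tensCoactR k H Δ V ∘ₗ (rTensor H act ∘ₗ exch k H H V ∘ₗ rTensor V Δ) =
      rTensor H (rTensor H act ∘ₗ exch k H H V ∘ₗ rTensor V Δ)
        ∘ₗ (exch k H H V ∘ₗ rTensor V Δ) := by
  have hco : ∀ h : H, (TensorProduct.assoc k H H H) ((rTensor H Δ) (Δ h))
      = (lTensor H Δ) (Δ h) := by
    intro h
    have := LinearMap.congr_fun hH.coassoc h
    simpa only [LinearMap.comp_apply, LinearEquiv.coe_coe] using this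
  constructor
  · -- left colinearity
    apply TensorProduct.ext'
    intro h v
    simp only [comp_apply, rTensor_tmul, LinearEquiv.coe_coe, TensorProduct.map_tmul]
    have h1 := LinearMap.congr_fun (DQBAux.auxS1 k H V Δ μ ρV act) (Δ h ⊗ₜ[k] v)
    simp only [comp_apply, rTensor_tmul, LinearEquiv.coe_coe] at h1
    rw [h1, ← hco h, DQBAux.auxF_assoc]
    have h2 := LinearMap.congr_fun (DQBAux.auxN1 k H V Δ) (Δ h ⊗ₜ[k] v)
    simp only [comp_apply, rTensor_tmul, LinearEquiv.coe_coe] at h2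
    rw [← h2, ← rTensor_comp_apply]
    have h3 : DQBAux.auxCL' k H V μ ρV act ∘ₗ rTensor V Δ
        = TensorProduct.map μ act
            ∘ₗ (TensorProduct.tensorTensorTensorComm k H H H V).toLinearMap
            ∘ₗ TensorProduct.map Δ ρV := by
      rw [DQBAux.auxCL']
      simp only [LinearMap.comp_assoc]
      exact hV.compat
    rw [h3]
    have h4 := LinearMap.congr_fun (DQBAux.auxS5a k H V Δ μ ρV act) (Δ h ⊗ₜ[k] v)
    simp only [comp_apply, rTensor_tmul, LinearEquiv.coe_coe, TensorProduct.map_tmul] at h4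
    rw [h4, hco h]
    have h5 := LinearMap.congr_fun (DQBAux.auxS5b k H V Δ μ act) (Δ h ⊗ₜ[k] ρV v)
    simp only [comp_apply, rTensor_tmul, LinearEquiv.coe_coe] at h5
    rw [← h5]
  · -- right colinearity
    apply TensorProduct.ext'
    intro h v
    simp only [comp_apply, rTensor_tmul, LinearEquiv.coe_coe]
    have h1 := LinearMap.congr_fun (DQBAux.auxS6 k H V Δ act) (Δ h ⊗ₜ[k] v)
    simp only [comp_apply, rTensor_tmul, LinearEquiv.coe_coe] at h1
    have h2 := LinearMap.congr_fun (DQBAux.auxS7 k H V Δ act) (Δ h ⊗ₜ[k] v)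
    simp only [comp_apply, rTensor_tmul, LinearEquiv.coe_coe] at h2
    rw [h1, h2, hco h]
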